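/- arXiv:2005.04839 — 8 statements merged into one kernel-verified Lean document; each statement's English description precedes it below -/
import Mathlib

section
/- Let P(x) = a0 x^4 + a1 x^3 + a2 x^2 + a3 x + a4 be a quartic polynomial over a field of characteristic zero, and define R(x,x0) = a4 x^2 x0^2 + (a3/2) x x0 (x + x0) + (a2/6)(x^2 + x0^2) + (2 a2/3) x x0 + (a1/2)(x + x0) + a0. Then R(x,x) = P(x), and the polynomial P(x) P(x0) - R(x,x0)^2 is divisible by (x - x0)^2; that is, there exists a polynomial R_1(x,x0) of bidegree (2,2) in (x,x0) with R(x,x0)^2 + R_1(x,x0) (x - x0)^2 - P(x) P(x0) = 0 for all x, x0. -/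
/-- For a quartic `P(x) = a0 x^4 + a1 x^3 + a2 x^2 + a3 x + a4` over a field of
characteristic zero and its polarized biquadratic form `R(x,x0)`, one has `R(x,x) = P(x)`, and
`P(x)P(x0) - R(x,x0)^2` is divisible by `(x - x0)^2` with a quotient `R1` of bidegree `(2,2)`. -/
theorem polarized_form_diagonal_and_divisibility
    {K : Type*} [Field K] [CharZero K] (a0 a1 a2 a3 a4 : K)
    (P : K → K) (hP : ∀ x, P x = a0 * x ^ 4 + a1 * x ^ 3 + a2 * x ^ 2 + a3 * x + a4)
    (R : K → K → K)
    (hR : ∀ x x0, R x x0 =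
      a0 * x ^ 2 * x0 ^ 2 + a1 / 2 * (x * x0) * (x + x0) + a2 / 6 * (x ^ 2 + x0 ^ 2)
        + 2 * a2 / 3 * (x * x0) + a3 / 2 * (x + x0) + a4) :
    (∀ x, R x x = P x) ∧
      ∃ c : Fin 3 → Fin 3 → K, ∀ x x0,
        R x x0 ^ 2
          + (∑ i : Fin 3, ∑ j : Fin 3, c i j * x ^ (i : ℕ) * x0 ^ (j : ℕ)) * (x - x0) ^ 2
          - P x * P x0 = 0 := by
  constructor
  · intro x
    rw [hR, hP]; ring
  · refine ⟨![![2/3*a2*a4 - 1/4*a3^2, a1*a4 - 1/6*a2*a3, a0*a4 - 1/36*a2^2],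
              ![a1*a4 - 1/6*a2*a3, 1/2*a1*a3 - 5/18*a2^2 + 2*a0*a4, a0*a3 - 1/6*a1*a2],
              ![a0*a4 - 1/36*a2^2, a0*a3 - 1/6*a1*a2, 2/3*a0*a2 - 1/4*a1^2]], ?_⟩
    intro x x0
    rw [hR, hP, hP]
    simp [Fin.sum_univ_three]
    ring
end

section
/- Let P(x) = a0 x^4 + a1 x^3 + a2 x^2 + a3 x + a4 and let R_1(x,x0) be the biquadratic polynomial satisfying R(x,x0)^2 + R_1(x,x0)(x-x0)^2 = P(x)P(x0), where R is the polarized form of P as above. Then the diagonal restriction Q(x) := R_1(x,x) satisfies Q(x) = (1/3) P(x) P''(x) - (1/4) P'(x)^2. -/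
open Polynomial

/-!
For fixed `x`, the map `x0 ↦ R1 x x0` is a quadratic polynomial, so its third finite difference
vanishes and `R1 x x = 3 R1 x (x+1) - 3 R1 x (x+2) + R1 x (x+3)`. Off the diagonal the defining
identity determines `R1` as `(P(x) P(x0) - R(x,x0)^2) / (x - x0)^2`, so the diagonal value is an
explicit expression in `x` and the coefficients, which is the covariant by direct computation.
-/

theorem diag_eq_third_difference_of_biquadratic {K : Type*} [CommRing K] (F : K → K → K)
    (c : Fin 3 → Fin 3 → K)
    (hF : ∀ x x0, F x x0 = ∑ i : Fin 3, ∑ j : Fin 3, c i j * x ^ (i : ℕ) * x0 ^ (j : ℕ))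
    (x : K) :
    F x x = 3 * F x (x + 1) - 3 * F x (x + 2) + F x (x + 3) := by
  simp only [hF, Fin.sum_univ_three, Fin.val_zero, Fin.val_one, Fin.val_two]
  ring

theorem eq_div_sq_of_sq_add_mul_sq_eq {K : Type*} [Field K] {r s d p : K}
    (h : r ^ 2 + s * d ^ 2 = p) (hd : d ≠ 0) : s = (p - r ^ 2) / d ^ 2 := by
  rw [eq_div_iff (pow_ne_zero 2 hd)]
  linear_combination h

/-- If `R1(x,x0)` is the biquadratic polynomial with
`R(x,x0)^2 + R1(x,x0)(x-x0)^2 = P(x)P(x0)` for the quartic `P` and its polarized form `R`,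
then the diagonal `Q(x) := R1(x,x)` equals `(1/3) P(x) P''(x) - (1/4) P'(x)^2`. -/
theorem diagonal_of_R1_eq_covariant
    {K : Type*} [Field K] [CharZero K] (a0 a1 a2 a3 a4 : K)
    (P : K[X]) (hP : P = C a0 * X ^ 4 + C a1 * X ^ 3 + C a2 * X ^ 2 + C a3 * X + C a4)
    (R : K → K → K)
    (hR : ∀ x x0, R x x0 =
      a0 * x ^ 2 * x0 ^ 2 + a1 / 2 * (x * x0) * (x + x0) + a2 / 6 * (x ^ 2 + x0 ^ 2)
        + 2 * a2 / 3 * (x * x0) + a3 / 2 * (x + x0) + a4)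
    (R1 : K → K → K)
    (hbideg : ∃ c : Fin 3 → Fin 3 → K, ∀ x x0,
      R1 x x0 = ∑ i : Fin 3, ∑ j : Fin 3, c i j * x ^ (i : ℕ) * x0 ^ (j : ℕ))
    (hident : ∀ x x0, R x x0 ^ 2 + R1 x x0 * (x - x0) ^ 2 = P.eval x * P.eval x0) :
    ∀ x, R1 x x =
      (1 : K) / 3 * (P.eval x * (derivative (derivative P)).eval x)
        - (1 : K) / 4 * ((derivative P).eval x) ^ 2 := by
  intro x
  obtain ⟨c, hc⟩ := hbideg
  have off_diag (k : K) (hk : k ≠ 0) :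
      R1 x (x + k) = (P.eval x * P.eval (x + k) - R x (x + k) ^ 2) / k ^ 2 :=
    eq_div_sq_of_sq_add_mul_sq_eq (by simpa using hident x (x + k)) hk
  rw [diag_eq_third_difference_of_biquadratic R1 c hc, off_diag 1 one_ne_zero,
    off_diag 2 two_ne_zero, off_diag 3 three_ne_zero, hR, hR, hR]
  simp only [hP, derivative_add, derivative_mul, derivative_C, derivative_X_pow, derivative_X,
    eval_add, eval_mul, eval_pow, eval_C, eval_X, derivative_zero, derivative_one, eval_zero,
    eval_one]
  field_simp
  ring
end

section
/- Let P(x) = a0 x^4 + a1 x^3 + a2 x^2 + a3 x + a4, let Q(x) = (1/3) P(x) P''(x) - (1/4) P'(x)^2, and let S(ξ) = ξ^3 + f ξ + g with f = -4 a0 a4 + a1 a3 - a2^2/3 and g = -(8/3) a0 a2 a4 + a0 a3^2 + a1^2 a4 - (1/3) a1 a2 a3 + (2/27) a2^3. Then the discriminant of Q with respect to x equals S(0)^2 times the discriminant of P with respect to x, i.e., Discr_x(Q) = g^2 · Discr_x(P). -/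
set_option maxHeartbeats 1000000


open Polynomial

/-- The usual discriminant of the quartic `a0 x^4 + a1 x^3 + a2 x^2 + a3 x + a4`. -/
def discQuartic {K : Type*} [Field K] (a0 a1 a2 a3 a4 : K) : K :=
  256 * a0 ^ 3 * a4 ^ 3 - 192 * a0 ^ 2 * a1 * a3 * a4 ^ 2 - 128 * a0 ^ 2 * a2 ^ 2 * a4 ^ 2
    + 144 * a0 ^ 2 * a2 * a3 ^ 2 * a4 - 27 * a0 ^ 2 * a3 ^ 4 + 144 * a0 * a1 ^ 2 * a2 * a4 ^ 2
    - 6 * a0 * a1 ^ 2 * a3 ^ 2 * a4 - 80 * a0 * a1 * a2 ^ 2 * a3 * a4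
    + 18 * a0 * a1 * a2 * a3 ^ 3 + 16 * a0 * a2 ^ 4 * a4 - 4 * a0 * a2 ^ 3 * a3 ^ 2
    - 27 * a1 ^ 4 * a4 ^ 2 + 18 * a1 ^ 3 * a2 * a3 * a4 - 4 * a1 ^ 3 * a3 ^ 3
    - 4 * a1 ^ 2 * a2 ^ 3 * a4 + a1 ^ 2 * a2 ^ 2 * a3 ^ 2

/-- For the quartic covariant `Q = (1/3) P P'' - (1/4) (P')^2` of
`P(x) = a0 x^4 + ... + a4` (which again has degree at most 4), one has
`Discr_x(Q) = g^2 · Discr_x(P)` where `g = S(0)` is Hermite's invariant. -/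
theorem disc_of_covariant_quartic
    {K : Type*} [Field K] [CharZero K] (a0 a1 a2 a3 a4 g : K)
    (P Q : K[X])
    (hP : P = C a0 * X ^ 4 + C a1 * X ^ 3 + C a2 * X ^ 2 + C a3 * X + C a4)
    (hQ : Q = C ((1 : K) / 3) * (P * derivative (derivative P))
      - C ((1 : K) / 4) * (derivative P) ^ 2)
    (hg : g = -(8 / 3) * a0 * a2 * a4 + a0 * a3 ^ 2 + a1 ^ 2 * a4 - 1 / 3 * a1 * a2 * a3
      + 2 / 27 * a2 ^ 3) :
    discQuartic (Q.coeff 4) (Q.coeff 3) (Q.coeff 2) (Q.coeff 1) (Q.coeff 0)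
      = g ^ 2 * discQuartic a0 a1 a2 a3 a4 := by
  have hP' : derivative P = C (4 * a0) * X ^ 3 + C (3 * a1) * X ^ 2
      + C (2 * a2) * X + C a3 := by
    rw [hP]
    simp only [derivative_add, derivative_mul, derivative_C, derivative_X_pow, derivative_X,
      map_mul, Nat.cast_ofNat, map_natCast, map_ofNat, derivative_ofNat, derivative_natCast]
    ring
  have hP'' : derivative (derivative P) = C (12 * a0) * X ^ 2 + C (6 * a1) * X
      + C (2 * a2) := by
    rw [hP']
    simp only [derivative_add, derivative_mul, derivative_C, derivative_X_pow, derivative_X,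
      map_mul, Nat.cast_ofNat, map_natCast, map_ofNat, derivative_ofNat, derivative_natCast]
    ring
  have h12 : C (12 : K) * Q
      = C (-3 * a1 ^ 2 + 8 * a0 * a2) * X ^ 4
      + C (-4 * a1 * a2 + 24 * a0 * a3) * X ^ 3
      + C (-4 * a2 ^ 2 + 6 * a1 * a3 + 48 * a0 * a4) * X ^ 2
      + C (-4 * a2 * a3 + 24 * a1 * a4) * X
      + C (-3 * a3 ^ 2 + 8 * a2 * a4) := by
    rw [hQ, hP'', hP', hP]
    simp only [mul_sub, ← mul_assoc, ← C_mul]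
    norm_num
    simp only [map_add, map_mul, map_neg, map_sub, map_pow, map_ofNat]
    ring
  have key : ∀ n : ℕ, 12 * Q.coeff n = (C (-3 * a1 ^ 2 + 8 * a0 * a2) * X ^ 4
      + C (-4 * a1 * a2 + 24 * a0 * a3) * X ^ 3
      + C (-4 * a2 ^ 2 + 6 * a1 * a3 + 48 * a0 * a4) * X ^ 2
      + C (-4 * a2 * a3 + 24 * a1 * a4) * X
      + C (-3 * a3 ^ 2 + 8 * a2 * a4)).coeff n := by
    intro n
    rw [← h12, coeff_C_mul]
  have e4 : Q.coeff 4 = (-3 * a1 ^ 2 + 8 * a0 * a2) / 12 := by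
    have h := key 4
    simp only [coeff_add, coeff_C_mul, coeff_X_pow, coeff_C, coeff_X] at h
    norm_num at h
    field_simp
    linear_combination h
  have e3 : Q.coeff 3 = (-4 * a1 * a2 + 24 * a0 * a3) / 12 := by
    have h := key 3
    simp only [coeff_add, coeff_C_mul, coeff_X_pow, coeff_C, coeff_X] at h
    norm_num at h
    field_simp
    linear_combination h
  have e2 : Q.coeff 2 = (-4 * a2 ^ 2 + 6 * a1 * a3 + 48 * a0 * a4) / 12 := by
    have h := key 2
    simp only [coeff_add, coeff_C_mul, coeff_X_pow, coeff_C, coeff_X] at h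
    norm_num at h
    field_simp
    linear_combination h
  have e1 : Q.coeff 1 = (-4 * a2 * a3 + 24 * a1 * a4) / 12 := by
    have h := key 1
    simp only [coeff_add, coeff_C_mul, coeff_X_pow, coeff_C, coeff_X] at h
    norm_num at h
    field_simp
    linear_combination h
  have e0 : Q.coeff 0 = (-3 * a3 ^ 2 + 8 * a2 * a4) / 12 := by
    have h := key 0
    simp only [coeff_add, coeff_C_mul, coeff_X_pow, coeff_C, coeff_X] at h
    norm_num at h
    field_simp
    linear_combination h
  rw [e4, e3, e2, e1, e0, hg]
  unfold discQuartic
  ring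
end

section
/- Let P(x) = (x-a)(x-b)(x-c)(x-d) be a quartic with distinct roots a, b, c, d, and let Q(x) = (1/3) P P'' - (1/4)(P')^2 and [P,Q] = P' Q - P Q'. Define r_{abcd}(x) = (a+b-c-d) x^2 - 2(ab - cd) x + ab(c+d) - (a+b)cd. Then r_{abcd}(x) · r_{acbd}(x) · r_{adbc}(x) = -4 [P,Q](x), where r_{acbd} and r_{adbc} are obtained from r_{abcd} by the indicated permutations of the roots. -/
open Polynomial

set_option maxHeartbeats 1600000000

/-- For `P(x) = (x-a)(x-b)(x-c)(x-d)` with distinct roots,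
`Q = (1/3) P P'' - (1/4)(P')^2` and `[P,Q] = P'Q - PQ'`, the quadratics
`r_{abcd}, r_{acbd}, r_{adbc}` satisfy `r_{abcd} · r_{acbd} · r_{adbc} = -4 [P,Q]`. -/
theorem r_product_eq_bracket
    {K : Type*} [Field K] [CharZero K] (a b c d : K)
    (hab : a ≠ b) (hac : a ≠ c) (had : a ≠ d) (hbc : b ≠ c) (hbd : b ≠ d) (hcd : c ≠ d)
    (P Q B : K[X])
    (hP : P = (X - C a) * (X - C b) * (X - C c) * (X - C d))
    (hQ : Q = C ((1 : K) / 3) * (P * derivative (derivative P))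
      - C ((1 : K) / 4) * (derivative P) ^ 2)
    (hB : B = derivative P * Q - P * derivative Q)
    (r : K → K → K → K → K[X])
    (hr : ∀ A B' C' D, r A B' C' D =
      C (A + B' - C' - D) * X ^ 2 - C (2 * (A * B' - C' * D)) * X
        + C (A * B' * (C' + D) - (A + B') * (C' * D))) :
    r a b c d * r a c b d * r a d b c = C (-4 : K) * B := by
  have hQ' : C (12 : K) * Q = C 4 * (P * derivative (derivative P)) - C 3 * (derivative P) ^ 2 := by
    have e1 : C (12 : K) * C ((1 : K) / 3) = C 4 := by rw [← C_mul]; norm_num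
    have e2 : C (12 : K) * C ((1 : K) / 4) = C 3 := by rw [← C_mul]; norm_num
    rw [← e1, ← e2, hQ]
    ring
  have hB' : C (12 : K) * B = derivative P * (C 12 * Q) - P * derivative (C 12 * Q) := by
    rw [hB, derivative_mul, derivative_C]
    ring
  have h12 : (C (12 : K)) ≠ 0 := by
    simp only [ne_eq, C_eq_zero]; norm_num
  apply mul_left_cancel₀ h12
  rw [show C (12:K) * (C (-4) * B) = C (-4) * (C 12 * B) by ring, hB', hQ', hP]
  simp only [hr, derivative_mul, derivative_sub, derivative_add, derivative_pow, derivative_X,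
    derivative_C, derivative_ofNat, derivative_natCast, derivative_one, derivative_zero,
    map_add, map_sub, map_mul, map_neg, map_one, map_ofNat, map_natCast, Nat.cast_ofNat, mul_zero, zero_mul, add_zero,
    zero_add, sub_zero, zero_sub, neg_zero, mul_one, one_mul]
  ring
end

section
/- Let P(x) = (x-a)(x-b)(x-c)(x-d) with a, b, c, d distinct, and let T be the Möbius involution T(x) = (-(ab-cd)x + (abc+abd-acd-bcd))/(-(a+b-c-d)x + (ab-cd)). Then P(T(x)) = C(x)^4 P(x), where C(x)^4 = (a-c)^2 (a-d)^2 (b-c)^2 (b-d)^2 / ((a+b-c-d)x - (ab-cd))^4. -/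
/-! Writing `T x = N / D`, for each root `r` of `P` the linear form `N - r D` is a constant
multiple of `x - r'`, where `r'` is the root paired with `r` by `(a b)(c d)`. Hence
`P (N / D) = ∏ (N - r D) / D ^ 4` is a constant multiple of `P x / D ^ 4`. -/

theorem quartic_eval_div {K : Type*} [Field K] (a b c d N : K) {D : K} (hD : D ≠ 0) :
    (N / D - a) * (N / D - b) * (N / D - c) * (N / D - d)
      = (N - a * D) * (N - b * D) * (N - c * D) * (N - d * D) / D ^ 4 := by
  field_simp

theorem quartic_transforms_under_involution_general
    {K : Type*} [Field K] (a b c d : K)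
    (P T : K → K)
    (hP : ∀ x, P x = (x - a) * (x - b) * (x - c) * (x - d))
    (hT : ∀ x, T x =
      (-(a * b - c * d) * x + (a * b * c + a * b * d - a * c * d - b * c * d))
        / (-(a + b - c - d) * x + (a * b - c * d))) :
    ∀ x, (a + b - c - d) * x - (a * b - c * d) ≠ 0 →
      P (T x) = (a - c) ^ 2 * (a - d) ^ 2 * (b - c) ^ 2 * (b - d) ^ 2
        / ((a + b - c - d) * x - (a * b - c * d)) ^ 4 * P x := by
  intro x hx
  have hD : -(a + b - c - d) * x + (a * b - c * d) ≠ 0 := by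
    contrapose! hx
    linear_combination -hx
  have hD4 : (-(a + b - c - d) * x + (a * b - c * d)) ^ 4
      = ((a + b - c - d) * x - (a * b - c * d)) ^ 4 := by ring
  have hNa : -(a * b - c * d) * x + (a * b * c + a * b * d - a * c * d - b * c * d)
      - a * (-(a + b - c - d) * x + (a * b - c * d)) = (a - c) * (a - d) * (x - b) := by ring
  have hNb : -(a * b - c * d) * x + (a * b * c + a * b * d - a * c * d - b * c * d)
      - b * (-(a + b - c - d) * x + (a * b - c * d)) = (b - c) * (b - d) * (x - a) := by ring
  have hNc : -(a * b - c * d) * x + (a * b * c + a * b * d - a * c * d - b * c * d)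
      - c * (-(a + b - c - d) * x + (a * b - c * d)) = -((a - c) * (b - c) * (x - d)) := by ring
  have hNd : -(a * b - c * d) * x + (a * b * c + a * b * d - a * c * d - b * c * d)
      - d * (-(a + b - c - d) * x + (a * b - c * d)) = -((a - d) * (b - d) * (x - c)) := by ring
  rw [hP, hT, quartic_eval_div _ _ _ _ _ hD, hNa, hNb, hNc, hNd, hD4, hP, div_mul_eq_mul_div]
  ring

/-- For `P(x) = (x-a)(x-b)(x-c)(x-d)` with distinct roots and the Möbius
involution `T`, one has `P(T(x)) = C(x)^4 P(x)` with
`C(x)^4 = (a-c)^2 (a-d)^2 (b-c)^2 (b-d)^2 / ((a+b-c-d)x - (ab-cd))^4`. -/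
theorem quartic_transforms_under_involution
    {K : Type*} [Field K] [CharZero K] (a b c d : K)
    (hab : a ≠ b) (hac : a ≠ c) (had : a ≠ d) (hbc : b ≠ c) (hbd : b ≠ d) (hcd : c ≠ d)
    (P T : K → K)
    (hP : ∀ x, P x = (x - a) * (x - b) * (x - c) * (x - d))
    (hT : ∀ x, T x =
      (-(a * b - c * d) * x + (a * b * c + a * b * d - a * c * d - b * c * d))
        / (-(a + b - c - d) * x + (a * b - c * d))) :
    ∀ x, (a + b - c - d) * x - (a * b - c * d) ≠ 0 →
      P (T x) = (a - c) ^ 2 * (a - d) ^ 2 * (b - c) ^ 2 * (b - d) ^ 2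
        / ((a + b - c - d) * x - (a * b - c * d)) ^ 4 * P x :=
  quartic_transforms_under_involution_general a b c d P T hP hT
end

section
/- Let λ1, λ2, λ3 be pairwise distinct, distinct from 0 and 1, and let κ satisfy κ^2 = λ2 λ3. Define c0 = 2(λ1 - 5λ2λ3)(5λ1 - λ2λ3)κ + (24λ2λ3 + λ2 + λ3)λ1^2 + 2λ1λ2λ3(12λ2λ3 - 17(λ2+λ3) + 12) + λ2^2λ3^2(λ2 + λ3 + 24), c1 = 8(λ1 + λ2λ3)κ - 2(6λ2λ3 - λ2 - λ3)λ1 + 2(λ2 + λ3 - 6)λ2λ3, c2 = λ2 + λ3 - 2κ. Then c1^2 - 4 c0 c2 = 144 κ^2 (λ2-1)(λ3-1)(λ2-λ1)(λ3-λ1). -/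
/-- For pairwise distinct `λ1, λ2, λ3` (distinct from `0, 1`) and `κ` with
`κ^2 = λ2 λ3`, the coefficients `c0, c1, c2` satisfy
`c1^2 - 4 c0 c2 = 144 κ^2 (λ2-1)(λ3-1)(λ2-λ1)(λ3-λ1)`. -/
theorem c_discriminant_identity_kappa23
    {K : Type*} [Field K] [CharZero K] (l1 l2 l3 κ c0 c1 c2 : K)
    (h12 : l1 ≠ l2) (h13 : l1 ≠ l3) (h23 : l2 ≠ l3)
    (h10 : l1 ≠ 0) (h20 : l2 ≠ 0) (h30 : l3 ≠ 0)
    (h11 : l1 ≠ 1) (h21 : l2 ≠ 1) (h31 : l3 ≠ 1)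
    (hκ : κ ^ 2 = l2 * l3)
    (hc0 : c0 = 2 * (l1 - 5 * l2 * l3) * (5 * l1 - l2 * l3) * κ
      + (24 * l2 * l3 + l2 + l3) * l1 ^ 2
      + 2 * l1 * l2 * l3 * (12 * l2 * l3 - 17 * (l2 + l3) + 12)
      + l2 ^ 2 * l3 ^ 2 * (l2 + l3 + 24))
    (hc1 : c1 = 8 * (l1 + l2 * l3) * κ - 2 * (6 * l2 * l3 - l2 - l3) * l1
      + 2 * (l2 + l3 - 6) * l2 * l3)
    (hc2 : c2 = l2 + l3 - 2 * κ) :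
    c1 ^ 2 - 4 * c0 * c2 = 144 * κ ^ 2 * (l2 - 1) * (l3 - 1) * (l2 - l1) * (l3 - l1) := by
  subst hc0 hc1 hc2
  linear_combination (64 * (l1 + l2 * l3) ^ 2 + 16 * (l1 - 5 * l2 * l3) * (5 * l1 - l2 * l3)
    - 144 * (l2 - 1) * (l3 - 1) * (l2 - l1) * (l3 - l1)) * hκ
end

section
/- Let P be a quartic polynomial with Discr_x(P) ≠ 0 and Q = (1/3)P P'' - (1/4)(P')^2. Then P and [P,Q] = P'Q - PQ' have no common root; equivalently, Res_x(P, [P,Q]) ≠ 0. -/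
/-! At a root `x` of `P` the bracket reduces to `P'(x) Q(x) = -(1/4) P'(x)^3`, so a common root of
`P` and `[P,Q]` is a double root of `P`. A quartic with a double root `r` factors as
`(X - r)^2 (p X^2 + q X + w)`, and the quartic discriminant vanishes identically on such
coefficients. -/

open Polynomial

section

variable {K : Type*} [Field K]

theorem discQuartic_coeff_X_sub_C_sq_mul_quadratic (r p q w : K) :
    let P := (X - C r) ^ 2 * (C w + C q * X + C p * X ^ 2)
    discQuartic (P.coeff 4) (P.coeff 3) (P.coeff 2) (P.coeff 1) (P.coeff 0) = 0 := by
  intro P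
  have hP : P = C p * X ^ 4 + C (q - 2 * r * p) * X ^ 3 + C (w - 2 * r * q + r ^ 2 * p) * X ^ 2
      + C (r ^ 2 * q - 2 * r * w) * X + C (r ^ 2 * w) := by
    simp only [P, map_sub, map_add, map_mul, map_pow, map_ofNat]
    ring
  simp only [hP, coeff_add, coeff_C_mul, coeff_X_pow, coeff_C, coeff_X]
  norm_num [discQuartic]
  ring

theorem discQuartic_eq_zero_of_X_sub_C_sq_dvd {P : K[X]} {r : K} (hdeg : P.natDegree = 4)
    (hdvd : (X - C r) ^ 2 ∣ P) :
    discQuartic (P.coeff 4) (P.coeff 3) (P.coeff 2) (P.coeff 1) (P.coeff 0) = 0 := by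
  obtain ⟨R, rfl⟩ := hdvd
  have hR : R ≠ 0 := by rintro rfl; simp at hdeg
  have hRdeg : R.natDegree = 2 := by
    rw [natDegree_mul (pow_ne_zero _ (X_sub_C_ne_zero r)) hR, natDegree_pow,
      natDegree_X_sub_C] at hdeg
    omega
  rw [as_sum_range_C_mul_X_pow R, hRdeg]
  simpa only [Finset.sum_range_succ, Finset.sum_range_zero, zero_add, pow_zero, pow_one, mul_one]
    using discQuartic_coeff_X_sub_C_sq_mul_quadratic r (R.coeff 2) (R.coeff 1) (R.coeff 0)

end

theorem eval_bracket_of_isRoot {R : Type*} [CommRing R] {P : R[X]} {x : R} (c d : R)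
    (hx : P.eval x = 0) :
    let Q := C c * (P * derivative (derivative P)) - C d * derivative P ^ 2
    (derivative P * Q - P * derivative Q).eval x = -d * (derivative P).eval x ^ 3 := by
  intro Q
  have hQx : Q.eval x = -d * (derivative P).eval x ^ 2 := by simp [Q, hx]
  simp only [eval_sub, eval_mul, hx, hQx]
  ring

theorem quartic_and_bracket_no_common_root_general
    {K : Type*} [Field K] [CharZero K]
    (P Q B : K[X])
    (hdeg : P.natDegree = 4)
    (hdisc : discQuartic (P.coeff 4) (P.coeff 3) (P.coeff 2) (P.coeff 1) (P.coeff 0) ≠ 0)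
    (hQ : Q = C ((1 : K) / 3) * (P * derivative (derivative P))
      - C ((1 : K) / 4) * (derivative P) ^ 2)
    (hB : B = derivative P * Q - P * derivative Q) :
    ∀ x : K, P.eval x = 0 → B.eval x ≠ 0 := by
  intro x hPx hBx
  subst hB hQ
  rw [eval_bracket_of_isRoot _ _ hPx] at hBx
  have hP'x : (derivative P).eval x = 0 := by simpa using hBx
  have hP0 : P ≠ 0 := by rintro rfl; simp at hdeg
  have hdvd : (X - C x) ^ 2 ∣ P :=
    (le_rootMultiplicity_iff hP0).mp ((one_lt_rootMultiplicity_iff_isRoot hP0).mpr ⟨hPx, hP'x⟩)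
  exact hdisc (discQuartic_eq_zero_of_X_sub_C_sq_dvd hdeg hdvd)

/-- If `P` is a quartic with nonzero discriminant and
`Q = (1/3) P P'' - (1/4)(P')^2`, then `P` and `[P,Q] = P'Q - PQ'` have no common root. -/
theorem quartic_and_bracket_no_common_root
    {K : Type*} [Field K] [IsAlgClosed K] [CharZero K]
    (P Q B : K[X])
    (hdeg : P.natDegree = 4)
    (hdisc : discQuartic (P.coeff 4) (P.coeff 3) (P.coeff 2) (P.coeff 1) (P.coeff 0) ≠ 0)
    (hQ : Q = C ((1 : K) / 3) * (P * derivative (derivative P))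
      - C ((1 : K) / 4) * (derivative P) ^ 2)
    (hB : B = derivative P * Q - P * derivative Q) :
    ∀ x : K, P.eval x = 0 → B.eval x ≠ 0 :=
  quartic_and_bracket_no_common_root_general P Q B hdeg hdisc hQ hB
end

section
/- Let P(x) = (x - x1)(x - x2)(x - x3)(x - x4) be a quartic with distinct roots, R and R1 the associated biquadratic polynomials with R(x,x0)^2 + R1(x,x0)(x-x0)^2 = P(x)P(x0), and B(x,x0) = γδ(x-x0)^2 - 4R1(x,x0) - 2(γ+δ)R(x,x0) for parameters γ, δ. Then for each root xn of P, the pair (x, w) = (xn, B(xn, x0)) satisfies the equation w^2 = q1(x,x0) q2(x,x0), where q1 = γ^2(x-x0)^2 - 4γR(x,x0) - 4R1(x,x0) and q2 = δ^2(x-x0)^2 - 4δR(x,x0) - 4R1(x,x0); i.e., B(xn,x0)^2 = q1(xn,x0) q2(xn,x0) identically in x0. -/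
/-- Let `P(x) = (x-x1)(x-x2)(x-x3)(x-x4)` with distinct roots, `R` its
polarized form (`R(x,x) = P(x)`) and `R1` the biquadratic polynomial with
`R^2 + R1 (x-x0)^2 = P(x)P(x0)`. With
`B(x,x0) = γδ(x-x0)^2 - 4 R1(x,x0) - 2(γ+δ) R(x,x0)`,
`q1 = γ^2(x-x0)^2 - 4γR - 4R1` and `q2 = δ^2(x-x0)^2 - 4δR - 4R1`, one has
`B(xn,x0)^2 = q1(xn,x0) q2(xn,x0)` identically in `x0` for each root `xn` of `P`. -/
theorem section_identity_at_roots
    {K : Type*} [Field K] [CharZero K] (x1 x2 x3 x4 γ δ : K)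
    (h12 : x1 ≠ x2) (h13 : x1 ≠ x3) (h14 : x1 ≠ x4)
    (h23 : x2 ≠ x3) (h24 : x2 ≠ x4) (h34 : x3 ≠ x4)
    (P : K → K) (hP : ∀ x, P x = (x - x1) * (x - x2) * (x - x3) * (x - x4))
    (R : K → K → K)
    (hR : ∀ x x0, R x x0 =
      x ^ 2 * x0 ^ 2
        + (-(x1 + x2 + x3 + x4)) / 2 * (x * x0) * (x + x0)
        + (x1 * x2 + x1 * x3 + x1 * x4 + x2 * x3 + x2 * x4 + x3 * x4) / 6 * (x ^ 2 + x0 ^ 2)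
        + 2 * (x1 * x2 + x1 * x3 + x1 * x4 + x2 * x3 + x2 * x4 + x3 * x4) / 3 * (x * x0)
        + (-(x1 * x2 * x3 + x1 * x2 * x4 + x1 * x3 * x4 + x2 * x3 * x4)) / 2 * (x + x0)
        + x1 * x2 * x3 * x4)
    (R1 : K → K → K)
    (hbideg : ∃ c : Fin 3 → Fin 3 → K, ∀ x x0,
      R1 x x0 = ∑ i : Fin 3, ∑ j : Fin 3, c i j * x ^ (i : ℕ) * x0 ^ (j : ℕ))
    (hident : ∀ x x0, R x x0 ^ 2 + R1 x x0 * (x - x0) ^ 2 = P x * P x0)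
    (B : K → K → K)
    (hBdef : ∀ x x0, B x x0 = γ * δ * (x - x0) ^ 2 - 4 * R1 x x0 - 2 * (γ + δ) * R x x0) :
    ∀ xn, P xn = 0 → ∀ x0,
      B xn x0 ^ 2 =
        (γ ^ 2 * (xn - x0) ^ 2 - 4 * γ * R xn x0 - 4 * R1 xn x0)
          * (δ ^ 2 * (xn - x0) ^ 2 - 4 * δ * R xn x0 - 4 * R1 xn x0) := by
  intro xn hn x0
  rw [hBdef]
  linear_combination (4 * (γ - δ) ^ 2) * hident xn x0 + (4 * (γ - δ) ^ 2 * P x0) * hn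
end
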